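/- The qubit dephasing channel M_p(ρ) = (1−p)ρ + p·YρY used in a superposition of input-output directions with control |+⟩⟨+| yields F_{|+⟩⟨+|}(M_p)(ρ) = (1−p)·ρ⊗|+⟩⟨+| + p·YρY⊗|−⟩⟨−|, and applying the correction Y conditioned on outcome '−' of a Fourier-basis control measurement recovers ρ exactly for every input state ρ. -/
import Mathlib


open Matrix BigOperators Kronecker

noncomputable def plusM : Matrix (Fin 2) (Fin 2) ℂ := Matrix.of fun _ _ => (1 : ℂ) / 2

noncomputable def minusM : Matrix (Fin 2) (Fin 2) ℂ :=
  Matrix.of fun i j => if i = j then (1 : ℂ) / 2 else -((1 : ℂ) / 2)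

def e00 : Matrix (Fin 2) (Fin 2) ℂ := Matrix.of fun i j => if i = 0 ∧ j = 0 then 1 else 0

def e11 : Matrix (Fin 2) (Fin 2) ℂ := Matrix.of fun i j => if i = 1 ∧ j = 1 then 1 else 0

/-- The Kraus operators of the quantum time flip: `F_i = C_i⊗|0⟩⟨0| + C_iᵀ⊗|1⟩⟨1|`. -/
noncomputable def flipK {d : ℕ} (C : Matrix (Fin d) (Fin d) ℂ) :
    Matrix (Fin d × Fin 2) (Fin d × Fin 2) ℂ := C ⊗ₖ e00 + Cᵀ ⊗ₖ e11

/-- Pauli Y. -/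
def pY : Matrix (Fin 2) (Fin 2) ℂ := !![0, -Complex.I; Complex.I, 0]

/-- Kraus operators of the qubit dephasing channel `M_p(ρ) = (1−p)ρ + pYρY`. -/
noncomputable def dephK (p : ℝ) : Fin 2 → Matrix (Fin 2) (Fin 2) ℂ :=
  ![((Real.sqrt (1 - p) : ℝ) : ℂ) • 1, ((Real.sqrt p : ℝ) : ℂ) • pY]

/-- The vector `|+⟩`. -/
noncomputable def plusVec : Fin 2 → ℂ := fun _ => ((Real.sqrt 2)⁻¹ : ℝ)

/-- The vector `|−⟩`. -/
noncomputable def minusVec : Fin 2 → ℂ :=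
  fun i => if i = 0 then (((Real.sqrt 2)⁻¹ : ℝ) : ℂ) else -(((Real.sqrt 2)⁻¹ : ℝ) : ℂ)

/-- The conditional target operator `⟨v|σ|v⟩` given a control vector `v`. -/
noncomputable def ctrlBlock (σ : Matrix (Fin 2 × Fin 2) (Fin 2 × Fin 2) ℂ)
    (v : Fin 2 → ℂ) : Matrix (Fin 2) (Fin 2) ℂ :=
  Matrix.of fun i j => ∑ a, ∑ b, star (v a) * σ (i, a) (j, b) * v b

/-- Bob's decoding: identity on control outcome `+`, Pauli-Y correction on outcome `−`. -/
noncomputable def decode (σ : Matrix (Fin 2 × Fin 2) (Fin 2 × Fin 2) ℂ) :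
    Matrix (Fin 2) (Fin 2) ℂ :=
  ctrlBlock σ plusVec + pY * ctrlBlock σ minusVec * pY

def pZ : Matrix (Fin 2) (Fin 2) ℂ := !![1, 0; 0, -1]

lemma e_add : e00 + e11 = (1 : Matrix (Fin 2) (Fin 2) ℂ) := by
  ext i j; fin_cases i <;> fin_cases j <;> simp [e00, e11, Matrix.one_apply]

lemma e_sub : e00 - e11 = pZ := by
  ext i j; fin_cases i <;> fin_cases j <;> simp [e00, e11, pZ]

lemma flipK0 (c : ℂ) : flipK (c • (1 : Matrix (Fin 2) (Fin 2) ℂ)) =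
    c • (1 : Matrix (Fin 2 × Fin 2) (Fin 2 × Fin 2) ℂ) := by
  rw [flipK, Matrix.transpose_smul, Matrix.transpose_one, Matrix.smul_kronecker,
    Matrix.smul_kronecker, ← smul_add, ← Matrix.kronecker_add, e_add,
    Matrix.one_kronecker_one]

lemma kron_ct (A B : Matrix (Fin 2) (Fin 2) ℂ) : (A ⊗ₖ B)ᴴ = Aᴴ ⊗ₖ Bᴴ := by
  ext ⟨i, a⟩ ⟨j, b⟩
  simp [Matrix.conjTranspose_apply, Matrix.kroneckerMap_apply]

lemma neg_kron (A B : Matrix (Fin 2) (Fin 2) ℂ) : (-A) ⊗ₖ B = -(A ⊗ₖ B) := by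
  ext ⟨i, a⟩ ⟨j, b⟩
  simp [Matrix.kroneckerMap_apply]

lemma flipK1 (c : ℂ) : flipK (c • pY) = c • (pY ⊗ₖ pZ) := by
  have hT : pYᵀ = -pY := by ext i j; fin_cases i <;> fin_cases j <;> simp [pY]
  rw [flipK, Matrix.transpose_smul, hT, Matrix.smul_kronecker, Matrix.smul_kronecker,
    ← smul_add]
  congr 1
  rw [← e_sub, neg_kron, sub_eq_add_neg, Matrix.kronecker_add]
  ext ⟨i, a⟩ ⟨j, b⟩
  simp [Matrix.kroneckerMap_apply]
  try ring

lemma pY_herm : pYᴴ = pY := by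
  ext i j; fin_cases i <;> fin_cases j <;> simp [pY]

lemma pZ_herm : pZᴴ = pZ := by
  ext i j; fin_cases i <;> fin_cases j <;> simp [pZ]

lemma Z_plus_Z : pZ * plusM * pZ = minusM := by
  ext i j; fin_cases i <;> fin_cases j <;>
    simp [pZ, plusM, minusM, Matrix.mul_apply, Fin.sum_univ_two, Matrix.vecHead, Matrix.vecTail]

lemma part1 (p : ℝ) (hp0 : 0 ≤ p) (hp1 : p ≤ 1) (ρ : Matrix (Fin 2) (Fin 2) ℂ) :
      ∑ i, flipK (dephK p i) * (ρ ⊗ₖ plusM) * (flipK (dephK p i))ᴴ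
        = ((1 - p : ℝ) : ℂ) • (ρ ⊗ₖ plusM) + ((p : ℝ) : ℂ) • ((pY * ρ * pY) ⊗ₖ minusM) := by
  have h1 : (Real.sqrt (1 - p) : ℂ) * (Real.sqrt (1 - p) : ℂ) = ((1 - p : ℝ) : ℂ) := by
    rw [← Complex.ofReal_mul, Real.mul_self_sqrt (by linarith)]
  have h2 : (Real.sqrt p : ℂ) * (Real.sqrt p : ℂ) = ((p : ℝ) : ℂ) := by
    rw [← Complex.ofReal_mul, Real.mul_self_sqrt hp0]
  rw [Fin.sum_univ_two]
  simp only [dephK, Matrix.cons_val_zero, Matrix.cons_val_one, Matrix.head_cons,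
    flipK0, flipK1]
  rw [Matrix.conjTranspose_smul, Matrix.conjTranspose_one,
    Matrix.conjTranspose_smul, kron_ct, pY_herm, pZ_herm]
  simp only [Complex.star_def, Complex.conj_ofReal]
  simp only [Matrix.smul_mul, Matrix.mul_smul, smul_smul, Matrix.mul_one, Matrix.one_mul]
  rw [h1, h2, ← Matrix.mul_kronecker_mul, ← Matrix.mul_kronecker_mul, Z_plus_Z]

lemma ctrl_kron (A M : Matrix (Fin 2) (Fin 2) ℂ) (v : Fin 2 → ℂ) :
    ctrlBlock (A ⊗ₖ M) v = (∑ a, ∑ b, star (v a) * M a b * v b) • A := by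
  ext i j
  simp [ctrlBlock, Fin.sum_univ_two, Matrix.kroneckerMap_apply]
  ring

lemma half : ((Real.sqrt 2 : ℝ) : ℂ)⁻¹ * ((Real.sqrt 2 : ℝ) : ℂ)⁻¹ = 1 / 2 := by
  rw [← mul_inv, ← Complex.ofReal_mul, Real.mul_self_sqrt (by norm_num)]
  norm_num

lemma half' : ((Real.sqrt 2 : ℝ) : ℂ)⁻¹ ^ 2 = 1 / 2 := by rw [sq, half]

lemma scalar_pp : (∑ a, ∑ b, star (plusVec a) * plusM a b * plusVec b) = 1 := by
  simp [Fin.sum_univ_two, plusVec, plusM, Complex.star_def, Complex.conj_ofReal]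
  ring_nf
  rw [half']
  norm_num

lemma scalar_mp : (∑ a, ∑ b, star (minusVec a) * plusM a b * minusVec b) = 0 := by
  simp [Fin.sum_univ_two, plusVec, minusVec, plusM, Complex.star_def, Complex.conj_ofReal]
  try ring_nf

lemma scalar_pm : (∑ a, ∑ b, star (plusVec a) * minusM a b * plusVec b) = 0 := by
  simp [Fin.sum_univ_two, plusVec, minusVec, minusM, Complex.star_def, Complex.conj_ofReal]
  try ring_nf

lemma scalar_mm : (∑ a, ∑ b, star (minusVec a) * minusM a b * minusVec b) = 1 := by
  simp [Fin.sum_univ_two, minusVec, minusM, Complex.star_def, Complex.conj_ofReal]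
  ring_nf
  rw [half']
  norm_num

lemma pY_sq : pY * pY = 1 := by
  ext i j; fin_cases i <;> fin_cases j <;>
    simp [pY, Matrix.mul_apply, Fin.sum_univ_two, Matrix.one_apply]

lemma ctrl_add (σ τ : Matrix (Fin 2 × Fin 2) (Fin 2 × Fin 2) ℂ) (v : Fin 2 → ℂ) :
    ctrlBlock (σ + τ) v = ctrlBlock σ v + ctrlBlock τ v := by
  ext i j; simp [ctrlBlock, Fin.sum_univ_two]; ring

lemma ctrl_smul (c : ℂ) (σ : Matrix (Fin 2 × Fin 2) (Fin 2 × Fin 2) ℂ) (v : Fin 2 → ℂ) :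
    ctrlBlock (c • σ) v = c • ctrlBlock σ v := by
  ext i j; simp [ctrlBlock, Fin.sum_univ_two]; ring

/-- The flipped dephasing channel is
`F_{|+⟩⟨+|}(M_p)(ρ) = (1−p)ρ⊗|+⟩⟨+| + pYρY⊗|−⟩⟨−|`, and a Pauli-Y correction
conditioned on the `−` outcome of a Fourier-basis control measurement recovers `ρ`
exactly, for every input state `ρ`. -/
theorem timeFlip_dephasing_and_perfect_recovery (p : ℝ) (hp0 : 0 ≤ p) (hp1 : p ≤ 1) :
    (∀ ρ : Matrix (Fin 2) (Fin 2) ℂ,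
      ∑ i, flipK (dephK p i) * (ρ ⊗ₖ plusM) * (flipK (dephK p i))ᴴ
        = ((1 - p : ℝ) : ℂ) • (ρ ⊗ₖ plusM) + ((p : ℝ) : ℂ) • ((pY * ρ * pY) ⊗ₖ minusM))
    ∧ (∀ ρ : Matrix (Fin 2) (Fin 2) ℂ,
      decode (∑ i, flipK (dephK p i) * (ρ ⊗ₖ plusM) * (flipK (dephK p i))ᴴ) = ρ) := by
  refine ⟨part1 p hp0 hp1, fun ρ => ?_⟩
  rw [part1 p hp0 hp1 ρ, decode]
  rw [ctrl_add, ctrl_add, ctrl_smul, ctrl_smul, ctrl_smul, ctrl_smul,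
    ctrl_kron, ctrl_kron, ctrl_kron, ctrl_kron,
    scalar_pp, scalar_pm, scalar_mp, scalar_mm]
  simp only [one_smul, zero_smul, smul_zero, add_zero, zero_add]
  rw [Matrix.mul_smul, Matrix.smul_mul, ← Matrix.mul_assoc, ← Matrix.mul_assoc,
    Matrix.mul_assoc (pY * pY * ρ), pY_sq, Matrix.one_mul, Matrix.mul_one]
  rw [← add_smul]
  push_cast
  simp
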